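/- Let 0 < σ < 1, β ∈ ℝ, 0 < ε < 1, and let f_ε be the regularization of f(ρ) = β ρ^σ as above. Then there is a constant C₃ depending only on σ and β such that |f_ε'(ρ)| + |ρ f_ε''(ρ)| + |ρ² f_ε'''(ρ)| ≤ C₃ / ε^{2-2σ} for all ρ ≥ 0. -/

import Mathlib

/-!
Rescaling `ρ = ε² u` turns `f_ε` into `β ε^{2σ} g(u)`, where `g` is the regularization with
`ε = β = 1`; hence `ρ^{k-1} f_ε^{(k)}(ρ) = β ε^{2σ-2} u^{k-1} g^{(k)}(u)`. Since
`binom(j-σ, j) = (-1)^j binom(σ-1, j)`, the cubic `Q` is the third-order Taylor polynomial of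
`u^{σ-1} = (1 - (1-u))^{σ-1}` at `u = 1`, so the derivatives of `u Q(u)` and `u^σ` agree at `u = 1`
up to order three and `g` is `C³`. Finally `u^{k-1} g^{(k)}(u)` is bounded on `[0, 1]` by
compactness and on `[1, ∞)` because there it is a constant multiple of `u^{σ-1} ≤ 1`.
-/

/-- Generalized binomial coefficient `binom(x, j) = x(x-1)⋯(x-j+1)/j!`. -/
noncomputable def gbinom (x : ℝ) (j : ℕ) : ℝ :=
  (∏ i ∈ Finset.range j, (x - i)) / (Nat.factorial j)

/-- The cubic polynomial `Q_ε(ρ) = β ε^{2σ-2} Σ_{j=0}^{3} binom(j-σ, j)(1-ρ/ε²)^j`. -/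
noncomputable def Qreg (σ β ε ρ : ℝ) : ℝ :=
  β * ε ^ (2 * σ - 2) *
    ∑ j ∈ Finset.range 4, gbinom ((j : ℝ) - σ) j * (1 - ρ / ε ^ 2) ^ j

/-- The local regularization `f_ε` of `f(ρ) = β ρ^σ`. -/
noncomputable def freg (σ β ε ρ : ℝ) : ℝ :=
  if ε ^ 2 ≤ ρ then β * ρ ^ σ else ρ * Qreg σ β ε ρ

open Polynomial

lemma hasDerivAt_ite_le {E : Type*} [NormedAddCommGroup E] [NormedSpace ℝ E]
    {g h : ℝ → E} {c x : ℝ} {g' h' : E}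
    (hg : c ≤ x → HasDerivAt g g' x) (hh : x ≤ c → HasDerivAt h h' x)
    (hc : x = c → g c = h c ∧ g' = h') :
    HasDerivAt (fun y => if c ≤ y then g y else h y) (if c ≤ x then g' else h') x := by
  rcases lt_trichotomy x c with hxc | rfl | hxc
  · rw [if_neg hxc.not_ge]
    refine (hh hxc.le).congr_of_eventuallyEq ?_
    filter_upwards [Iio_mem_nhds hxc] with y hy
    rw [if_neg (not_le.2 hy)]
  · obtain ⟨hgh, rfl⟩ := hc rfl
    rw [if_pos le_rfl, ← hasDerivWithinAt_univ, ← Set.Iic_union_Ici (a := x)]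
    refine HasDerivWithinAt.union ?_ ?_
    · refine (hh le_rfl).hasDerivWithinAt.congr (fun y hy => ?_) (by simp [hgh])
      rcases (Set.mem_Iic.1 hy).lt_or_eq with hy | rfl
      · simp [hy.not_ge]
      · simp [hgh]
    · exact (hg le_rfl).hasDerivWithinAt.congr (fun y hy => if_pos hy) (if_pos le_rfl)
  · rw [if_pos hxc.le]
    refine (hg hxc.le).congr_of_eventuallyEq ?_
    filter_upwards [Ioi_mem_nhds hxc] with y hy
    rw [if_pos (le_of_lt hy)]

noncomputable def regPoly (σ : ℝ) : ℝ[X] :=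
  X * ∑ j ∈ Finset.range 4, C (gbinom ((j : ℝ) - σ) j) * (1 - X) ^ j

lemma iterate_derivative_regPoly_eval_one (σ : ℝ) {k : ℕ} (hk : k ≤ 3) :
    (derivative^[k] (regPoly σ)).eval 1 = (descPochhammer ℝ k).eval σ := by
  interval_cases k <;>
    simp [regPoly, Finset.sum_range_succ, gbinom, Finset.prod_range_succ, descPochhammer_succ_eval,
      Nat.factorial, derivative_mul, derivative_sub, derivative_pow] <;> ring

/-- For `k ≤ 3`, the `k`-th derivative of the profile `freg σ 1 1`, in terms of which
`freg σ β ε ρ = β (ε²)^σ profileDeriv σ 0 (ρ / ε²)`. -/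
noncomputable def profileDeriv (σ : ℝ) (k : ℕ) (u : ℝ) : ℝ :=
  if 1 ≤ u then (descPochhammer ℝ k).eval σ * u ^ (σ - k) else (derivative^[k] (regPoly σ)).eval u

lemma hasDerivAt_profileDeriv (σ : ℝ) {k : ℕ} (hk : k < 3) (u : ℝ) :
    HasDerivAt (profileDeriv σ k) (profileDeriv σ (k + 1) u) u := by
  have hpow (hu : 1 ≤ u) : HasDerivAt (fun u => (descPochhammer ℝ k).eval σ * u ^ (σ - k))
      ((descPochhammer ℝ (k + 1)).eval σ * u ^ (σ - (k + 1 : ℕ))) u := by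
    refine ((Real.hasDerivAt_rpow_const (p := σ - k) (Or.inl (by positivity))).const_mul
      ((descPochhammer ℝ k).eval σ)).congr_deriv ?_
    rw [descPochhammer_succ_eval]; push_cast; ring_nf
  have hpoly : HasDerivAt (fun u => (derivative^[k] (regPoly σ)).eval u)
      ((derivative^[k + 1] (regPoly σ)).eval u) u := by
    rw [Function.iterate_succ_apply']
    exact Polynomial.hasDerivAt _ u
  exact hasDerivAt_ite_le hpow (fun _ => hpoly) fun hu => by
    subst hu
    refine ⟨?_, ?_⟩ <;> simp only [Real.one_rpow, mul_one]
    exacts [(iterate_derivative_regPoly_eval_one σ hk.le).symm,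
      (iterate_derivative_regPoly_eval_one σ hk).symm]

lemma iteratedDeriv_const_mul_comp_div {G : ℕ → ℝ → ℝ} {n : ℕ}
    (hG : ∀ k < n, ∀ u, HasDerivAt (G k) (G (k + 1) u) u) (c s : ℝ) {k : ℕ} (hk : k ≤ n) :
    iteratedDeriv k (fun x => c * G 0 (x / s)) = fun x => c / s ^ k * G k (x / s) := by
  induction k with
  | zero => simp
  | succ k ih =>
    rw [iteratedDeriv_succ, ih (by omega)]
    funext x
    have hdiv : HasDerivAt (fun x => x / s) (1 / s) x := (hasDerivAt_id x).div_const s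
    refine (((hG k (by omega) (x / s)).comp x hdiv).const_mul (c / s ^ k)).deriv.trans ?_
    ring

lemma exists_bound_pow_mul_profileDeriv {σ : ℝ} (hσ : σ ≤ 1) (k : ℕ) :
    ∃ M, ∀ u, 0 ≤ u → |u ^ k * profileDeriv σ (k + 1) u| ≤ M := by
  obtain ⟨M, hM⟩ := isCompact_Icc.exists_bound_of_continuousOn
    (s := Set.Icc (0 : ℝ) 1) (f := fun u => u ^ k * (derivative^[k + 1] (regPoly σ)).eval u)
    (by fun_prop)
  refine ⟨max M |(descPochhammer ℝ (k + 1)).eval σ|, fun u hu => ?_⟩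
  unfold profileDeriv
  split_ifs with h1
  · have hpow : u ^ k * u ^ (σ - (k + 1 : ℕ)) = u ^ (σ - 1) := by
      rw [← Real.rpow_natCast, ← Real.rpow_add (by linarith)]; push_cast; ring_nf
    have hle : u ^ (σ - 1) ≤ 1 := Real.rpow_le_one_of_one_le_of_nonpos h1 (by linarith)
    calc |u ^ k * ((descPochhammer ℝ (k + 1)).eval σ * u ^ (σ - (k + 1 : ℕ)))|
        = |(descPochhammer ℝ (k + 1)).eval σ| * u ^ (σ - 1) := by
          rw [mul_left_comm, hpow, abs_mul, abs_of_nonneg (Real.rpow_nonneg hu _)]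
      _ ≤ |(descPochhammer ℝ (k + 1)).eval σ| := mul_le_of_le_one_right (abs_nonneg _) hle
      _ ≤ _ := le_max_right _ _
  · exact (hM u ⟨hu, (not_le.1 h1).le⟩).trans (le_max_left _ _)

lemma sq_rpow_eq_sq_div_rpow_two_sub {ε : ℝ} (hε : 0 < ε) (σ : ℝ) :
    (ε ^ 2) ^ σ = ε ^ 2 / ε ^ (2 - 2 * σ) := by
  rw [eq_div_iff (by positivity), ← Real.rpow_natCast_mul hε.le, ← Real.rpow_add hε]; norm_num

lemma freg_eq_profileDeriv_zero {σ β ε : ℝ} (hε : 0 < ε) :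
    freg σ β ε = fun ρ => β * (ε ^ 2) ^ σ * profileDeriv σ 0 (ρ / ε ^ 2) := by
  have hs : 0 < ε ^ 2 := by positivity
  funext ρ
  unfold freg profileDeriv
  by_cases h : ε ^ 2 ≤ ρ
  · rw [if_pos h, if_pos ((one_le_div hs).2 h), Real.div_rpow (hs.le.trans h) hs.le]
    simp [field]
  · have hE : ε ^ (2 * σ - 2) * ε ^ 2 = (ε ^ 2) ^ σ := by
      rw [← Real.rpow_natCast_mul hε.le, ← Real.rpow_natCast, ← Real.rpow_add hε]; norm_num
    rw [if_neg h, if_neg (by rwa [one_le_div hs]), ← hE]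
    simp only [Qreg, regPoly, Function.iterate_zero, id_eq, eval_mul, eval_X, eval_finsetSum,
      eval_C, eval_pow, eval_sub, eval_one]
    field_simp

lemma pow_mul_iteratedDeriv_succ_freg {σ β ε : ℝ} (hε : 0 < ε) {k : ℕ} (hk : k < 3) (ρ : ℝ) :
    ρ ^ k * iteratedDeriv (k + 1) (freg σ β ε) ρ
      = β / ε ^ (2 - 2 * σ) * ((ρ / ε ^ 2) ^ k * profileDeriv σ (k + 1) (ρ / ε ^ 2)) := by
  rw [freg_eq_profileDeriv_zero hε,
    iteratedDeriv_const_mul_comp_div (G := profileDeriv σ) (n := 3)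
      (fun _ hj => hasDerivAt_profileDeriv σ hj) _ _ hk,
    sq_rpow_eq_sq_div_rpow_two_sub hε σ, pow_succ (ε ^ 2) k, div_pow]
  field_simp

theorem stmt11_general (σ β : ℝ) (hσ1 : σ < 1) :
    ∃ C₃ : ℝ, 0 < C₃ ∧ ∀ ε : ℝ, 0 < ε → ε < 1 → ∀ ρ : ℝ, 0 ≤ ρ →
      |deriv (freg σ β ε) ρ| + |ρ * iteratedDeriv 2 (freg σ β ε) ρ|
          + |ρ ^ 2 * iteratedDeriv 3 (freg σ β ε) ρ|
        ≤ C₃ / ε ^ (2 - 2 * σ) := by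
  obtain ⟨M₁, hM₁⟩ := exists_bound_pow_mul_profileDeriv hσ1.le 0
  obtain ⟨M₂, hM₂⟩ := exists_bound_pow_mul_profileDeriv hσ1.le 1
  obtain ⟨M₃, hM₃⟩ := exists_bound_pow_mul_profileDeriv hσ1.le 2
  refine ⟨|β| * (|M₁| + |M₂| + |M₃|) + 1, by positivity, fun ε hε _ ρ hρ => ?_⟩
  have hu : 0 ≤ ρ / ε ^ 2 := by positivity
  have h₁ := pow_mul_iteratedDeriv_succ_freg (σ := σ) (β := β) hε (k := 0) (by norm_num) ρ
  have h₂ := pow_mul_iteratedDeriv_succ_freg (σ := σ) (β := β) hε (k := 1) (by norm_num) ρ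
  have h₃ := pow_mul_iteratedDeriv_succ_freg (σ := σ) (β := β) hε (k := 2) (by norm_num) ρ
  rw [pow_zero, one_mul, iteratedDeriv_one] at h₁
  rw [pow_one] at h₂
  have hE : 0 < ε ^ (2 - 2 * σ) := by positivity
  rw [h₁, h₂, h₃, abs_mul (β / _), abs_mul (β / _), abs_mul (β / _), ← mul_add, ← mul_add,
    abs_div, abs_of_pos hE, div_mul_eq_mul_div]
  gcongr
  refine le_add_of_le_of_nonneg (mul_le_mul_of_nonneg_left ?_ (abs_nonneg β)) zero_le_one
  exact add_le_add (add_le_add ((hM₁ _ hu).trans (le_abs_self _))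
    ((hM₂ _ hu).trans (le_abs_self _))) ((hM₃ _ hu).trans (le_abs_self _))

/-- `|f_ε'(ρ)| + |ρ f_ε''(ρ)| + |ρ² f_ε'''(ρ)| ≤ C₃ / ε^{2-2σ}` for all `ρ ≥ 0`. -/
theorem stmt11 (σ β : ℝ) (hσ0 : 0 < σ) (hσ1 : σ < 1) :
    ∃ C₃ : ℝ, 0 < C₃ ∧ ∀ ε : ℝ, 0 < ε → ε < 1 → ∀ ρ : ℝ, 0 ≤ ρ →
      |deriv (freg σ β ε) ρ| + |ρ * iteratedDeriv 2 (freg σ β ε) ρ|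
          + |ρ ^ 2 * iteratedDeriv 3 (freg σ β ε) ρ|
        ≤ C₃ / ε ^ (2 - 2 * σ) :=
  stmt11_general σ β hσ1
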